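/- arXiv:2409.10037 — 2 statements merged into one kernel-verified Lean document; each statement's English description precedes it below -/
import Mathlib

section
/- Let d ≥ 1 and let α, β be nonpositive real numbers with α > -d, β > -d and α + β < -d. Then there is a constant C such that for all k ∈ ℤ^d, the sum over ℓ ∈ ℤ^d of ⟨ℓ⟩^α ⟨k-ℓ⟩^β is at most C ⟨k⟩^{d+α+β}, where ⟨x⟩ = (1+|x|²)^{1/2}. -/
/-- The Japanese bracket `⟨x⟩ = (1 + |x|²)^{1/2}` of a lattice point `x ∈ ℤ^d`. -/
noncomputable def jbracket {d : ℕ} (l : Fin d → ℤ) : ℝ :=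
  (1 + ∑ r, ((l r : ℝ)) ^ 2) ^ ((1 : ℝ) / 2)

/-!
Split the sum according to whether `⟨ℓ⟩ ≤ ⟨k - ℓ⟩`. The substitution `ℓ ↦ k - ℓ` exchanges the
two parts together with the roles of `α` and `β`, so it suffices to bound the first. There
`⟨k - ℓ⟩ ≥ max (⟨k⟩ / 2) ⟨ℓ⟩` by the triangle inequality for `⟨·⟩`. Where `⟨ℓ⟩ ≤ ⟨k⟩` this bounds
the terms by `⟨k⟩^β ⟨ℓ⟩^α`, whose sum is `≲ ⟨k⟩^β ⟨k⟩^(d+α)` because `α > -d`; where `⟨ℓ⟩ > ⟨k⟩`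
it bounds them by `⟨ℓ⟩^(α+β)`, whose sum is `≲ ⟨k⟩^(d+α+β)` because `α + β < -d`.
Both lattice sums are estimated dyadically: the shell `2^j ≤ ⟨ℓ⟩ < 2^(j+1)` has `O(2^(jd))`
points, so it contributes `O(2^(j(d+t)))` to `∑ ⟨ℓ⟩^t`, and a geometric series is comparable to
its largest term.
-/

open Finset

section

variable {d : ℕ}

lemma one_le_jbracket (l : Fin d → ℤ) : 1 ≤ jbracket l :=
  Real.one_le_rpow (le_add_of_nonneg_right (by positivity)) (by norm_num)

lemma jbracket_pos (l : Fin d → ℤ) : 0 < jbracket l :=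
  zero_lt_one.trans_le (one_le_jbracket l)

lemma abs_apply_le_jbracket (l : Fin d → ℤ) (i : Fin d) : |(l i : ℝ)| ≤ jbracket l := by
  rw [jbracket, ← Real.sqrt_eq_rpow, ← Real.sqrt_sq_eq_abs]
  refine Real.sqrt_le_sqrt ?_
  have := single_le_sum (f := fun r => ((l r : ℝ)) ^ 2) (fun r _ => sq_nonneg _) (mem_univ i)
  linarith

lemma jbracket_add_le (a b : Fin d → ℤ) : jbracket (a + b) ≤ jbracket a + jbracket b := by
  have hmink := Real.Lp_add_le univ (Fin.cons 1 (fun r => (a r : ℝ)) : Fin (d + 1) → ℝ)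
    (Fin.cons 1 (fun r => (b r : ℝ))) one_le_two
  simp only [Fin.sum_univ_succ, Fin.cons_zero, Fin.cons_succ, Real.rpow_two, sq_abs,
    one_pow] at hmink
  refine le_trans ?_ hmink
  unfold jbracket
  gcongr ?_ ^ _
  simp only [Pi.add_apply, Int.cast_add]
  norm_num

lemma jbracket_le_add_jbracket_sub (k l : Fin d → ℤ) :
    jbracket k ≤ jbracket l + jbracket (k - l) := by
  simpa using jbracket_add_le l (k - l)

lemma card_le_of_forall_jbracket_le {F : Finset (Fin d → ℤ)} {R : ℝ} (hR : 0 ≤ R)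
    (hF : ∀ l ∈ F, jbracket l ≤ R) : (#F : ℝ) ≤ (2 * R + 1) ^ d := by
  have hsub : F ⊆ Fintype.piFinset fun _ => Icc (-⌊R⌋) ⌊R⌋ := fun l hl =>
    Fintype.mem_piFinset.2 fun i => mem_Icc.2 <| abs_le.1 <| Int.le_floor.2 <| by
      exact_mod_cast (abs_apply_le_jbracket l i).trans (hF l hl)
  have hfloor : 0 ≤ ⌊R⌋ := Int.floor_nonneg.2 hR
  calc (#F : ℝ) ≤ #(Fintype.piFinset fun _ : Fin d => Icc (-⌊R⌋) ⌊R⌋) := by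
        exact_mod_cast card_le_card hsub
    _ = (2 * ⌊R⌋ + 1 : ℤ) ^ d := by
        rw [Fintype.card_piFinset, prod_const, card_univ, Fintype.card_fin, Int.card_Icc,
          show ⌊R⌋ + 1 - -⌊R⌋ = 2 * ⌊R⌋ + 1 by ring, Nat.cast_pow, ← Int.cast_natCast,
          Int.toNat_of_nonneg (by omega)]
    _ ≤ (2 * R + 1) ^ d := by
        push_cast
        gcongr
        exact Int.floor_le R

noncomputable def dyadicScale (x : ℝ) : ℕ := Nat.log 2 ⌊x⌋₊

lemma two_pow_dyadicScale_le {x : ℝ} (hx : 1 ≤ x) : (2 : ℝ) ^ dyadicScale x ≤ x := by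
  have hfloor : ⌊x⌋₊ ≠ 0 := (Nat.floor_pos.2 hx).ne'
  calc (2 : ℝ) ^ dyadicScale x ≤ ⌊x⌋₊ := by exact_mod_cast Nat.pow_log_le_self 2 hfloor
    _ ≤ x := Nat.floor_le (by linarith)

lemma lt_two_pow_dyadicScale_succ (x : ℝ) : x < 2 ^ (dyadicScale x + 1) :=
  calc x < ⌊x⌋₊ + 1 := Nat.lt_floor_add_one x
    _ ≤ 2 ^ (dyadicScale x + 1) := by
        exact_mod_cast Nat.lt_pow_succ_log_self one_lt_two ⌊x⌋₊

lemma dyadicScale_mono : Monotone dyadicScale := fun _ _ h =>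
  Nat.log_mono_right (Nat.floor_mono h)

lemma sum_jbracket_rpow_le_of_dyadicScale_eq {t : ℝ} (ht : t ≤ 0) (F : Finset (Fin d → ℤ))
    (j : ℕ) (hF : ∀ l ∈ F, dyadicScale (jbracket l) = j) :
    ∑ l ∈ F, jbracket l ^ t ≤ 8 ^ d * ((2 : ℝ) ^ ((d : ℝ) + t)) ^ j := by
  have hlower (l) (hl : l ∈ F) : (2 : ℝ) ^ j ≤ jbracket l :=
    hF l hl ▸ two_pow_dyadicScale_le (one_le_jbracket l)
  have hupper (l) (hl : l ∈ F) : jbracket l ≤ 2 ^ (j + 1) :=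
    (hF l hl ▸ lt_two_pow_dyadicScale_succ (jbracket l)).le
  have hcard : (#F : ℝ) ≤ (8 * 2 ^ j) ^ d :=
    (card_le_of_forall_jbracket_le (by positivity) hupper).trans <| by
      gcongr
      linarith [one_le_pow₀ (M₀ := ℝ) one_le_two (n := j), pow_succ (2 : ℝ) j]
  calc ∑ l ∈ F, jbracket l ^ t ≤ ∑ _l ∈ F, ((2 : ℝ) ^ j) ^ t :=
        sum_le_sum fun l hl => Real.rpow_le_rpow_of_nonpos (by positivity) (hlower l hl) ht
    _ = #F * ((2 : ℝ) ^ j) ^ t := by rw [sum_const, nsmul_eq_mul]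
    _ ≤ (8 * 2 ^ j) ^ d * ((2 : ℝ) ^ j) ^ t := by gcongr
    _ = 8 ^ d * ((2 : ℝ) ^ ((d : ℝ) + t)) ^ j := by
        rw [Real.rpow_pow_comm zero_le_two, Real.rpow_add (by positivity), Real.rpow_natCast,
          mul_pow, mul_assoc]

lemma sum_jbracket_rpow_le_geom_sum {t : ℝ} (ht : t ≤ 0) (F : Finset (Fin d → ℤ)) :
    ∑ l ∈ F, jbracket l ^ t
      ≤ 8 ^ d * ∑ j ∈ F.image (dyadicScale ∘ jbracket), ((2 : ℝ) ^ ((d : ℝ) + t)) ^ j := by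
  rw [← sum_fiberwise_of_maps_to (fun l hl => mem_image_of_mem (dyadicScale ∘ jbracket) hl),
    mul_sum]
  exact sum_le_sum fun j _ =>
    sum_jbracket_rpow_le_of_dyadicScale_eq ht _ j fun l hl => (mem_filter.1 hl).2

lemma exists_sum_jbracket_rpow_le_of_forall_jbracket_le {t : ℝ} (ht0 : t ≤ 0)
    (ht : -(d : ℝ) < t) :
    ∃ C, ∀ R, 1 ≤ R → ∀ F : Finset (Fin d → ℤ), (∀ l ∈ F, jbracket l ≤ R) →
      ∑ l ∈ F, jbracket l ^ t ≤ C * R ^ ((d : ℝ) + t) := by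
  set q : ℝ := 2 ^ ((d : ℝ) + t)
  have hq : 1 < q := Real.one_lt_rpow one_lt_two (by linarith)
  refine ⟨8 ^ d * q / (q - 1), fun R hR F hF => ?_⟩
  set J := dyadicScale R + 1
  have himage : F.image (dyadicScale ∘ jbracket) ⊆ range J := fun j hj => by
    obtain ⟨l, hl, rfl⟩ := mem_image.1 hj
    exact mem_range.2 (Nat.lt_succ_of_le (dyadicScale_mono (hF l hl)))
  have hqJ : q ^ J ≤ q * R ^ ((d : ℝ) + t) := by
    have h2J : (2 : ℝ) ^ J ≤ 2 * R := by
      rw [pow_succ']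
      linarith [two_pow_dyadicScale_le hR]
    calc q ^ J = ((2 : ℝ) ^ J) ^ ((d : ℝ) + t) := Real.rpow_pow_comm zero_le_two _ _
      _ ≤ (2 * R) ^ ((d : ℝ) + t) := by gcongr; linarith
      _ = q * R ^ ((d : ℝ) + t) := Real.mul_rpow zero_le_two (by linarith)
  calc ∑ l ∈ F, jbracket l ^ t
      ≤ 8 ^ d * ∑ j ∈ F.image (dyadicScale ∘ jbracket), q ^ j :=
        sum_jbracket_rpow_le_geom_sum ht0 F
    _ ≤ 8 ^ d * ∑ j ∈ range J, q ^ j := by gcongr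
    _ = 8 ^ d * ((q ^ J - 1) / (q - 1)) := by rw [geom_sum_eq hq.ne']
    _ ≤ 8 ^ d * (q * R ^ ((d : ℝ) + t) / (q - 1)) := by
        gcongr
        linarith
    _ = 8 ^ d * q / (q - 1) * R ^ ((d : ℝ) + t) := by ring

lemma exists_sum_jbracket_rpow_le_of_forall_le_jbracket {t : ℝ} (ht : t < -(d : ℝ)) :
    ∃ C, ∀ R, 1 ≤ R → ∀ F : Finset (Fin d → ℤ), (∀ l ∈ F, R ≤ jbracket l) →
      ∑ l ∈ F, jbracket l ^ t ≤ C * R ^ ((d : ℝ) + t) := by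
  set q : ℝ := 2 ^ ((d : ℝ) + t)
  have hq0 : 0 < q := by positivity
  have hq1 : q < 1 := Real.rpow_lt_one_of_one_lt_of_neg one_lt_two (by linarith)
  refine ⟨8 ^ d / (q * (1 - q)), fun R hR F hF => ?_⟩
  set S := F.image (dyadicScale ∘ jbracket)
  set j₀ := dyadicScale R
  have hS : S ⊆ Ico j₀ (S.sup id + 1) := fun j hj => by
    refine mem_Ico.2 ⟨?_, Nat.lt_succ_of_le (le_sup (f := id) hj)⟩
    obtain ⟨l, hl, rfl⟩ := mem_image.1 hj
    exact dyadicScale_mono (hF l hl)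
  have hqj₀ : q ^ j₀ ≤ q⁻¹ * R ^ ((d : ℝ) + t) := by
    have hR2 : R / 2 ≤ 2 ^ j₀ := by
      linarith [lt_two_pow_dyadicScale_succ R, pow_succ (2 : ℝ) j₀]
    calc q ^ j₀ = ((2 : ℝ) ^ j₀) ^ ((d : ℝ) + t) := Real.rpow_pow_comm zero_le_two _ _
      _ ≤ (R / 2) ^ ((d : ℝ) + t) :=
        Real.rpow_le_rpow_of_nonpos (by positivity) hR2 (by linarith)
      _ = q⁻¹ * R ^ ((d : ℝ) + t) := by
        rw [Real.div_rpow (by linarith) zero_le_two, div_eq_inv_mul]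
  calc ∑ l ∈ F, jbracket l ^ t
      ≤ 8 ^ d * ∑ j ∈ S, q ^ j := sum_jbracket_rpow_le_geom_sum (by linarith) F
    _ ≤ 8 ^ d * ∑ j ∈ Ico j₀ (S.sup id + 1), q ^ j := by gcongr
    _ ≤ 8 ^ d * (q ^ j₀ / (1 - q)) := by gcongr; exact geom_sum_Ico_le_of_lt_one hq0.le hq1
    _ ≤ 8 ^ d * (q⁻¹ * R ^ ((d : ℝ) + t) / (1 - q)) := by gcongr
    _ = 8 ^ d / (q * (1 - q)) * R ^ ((d : ℝ) + t) := by field_simp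

lemma exists_sum_mul_le_of_forall_jbracket_le_jbracket_sub {α β : ℝ} (hα0 : α ≤ 0)
    (hβ0 : β ≤ 0) (hα : -(d : ℝ) < α) (hαβ : α + β < -(d : ℝ)) :
    ∃ C, ∀ (k : Fin d → ℤ) (F : Finset (Fin d → ℤ)), (∀ l ∈ F, jbracket l ≤ jbracket (k - l)) →
      ∑ l ∈ F, jbracket l ^ α * jbracket (k - l) ^ β ≤ C * jbracket k ^ ((d : ℝ) + α + β) := by
  obtain ⟨Cnear, hnear⟩ := exists_sum_jbracket_rpow_le_of_forall_jbracket_le hα0 hα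
  obtain ⟨Cfar, hfar⟩ := exists_sum_jbracket_rpow_le_of_forall_le_jbracket hαβ
  refine ⟨2 ^ (-β) * Cnear + Cfar, fun k F hF => ?_⟩
  set K := jbracket k
  have hK : 1 ≤ K := one_le_jbracket k
  have hhalf (l) (hl : l ∈ F) : K / 2 ≤ jbracket (k - l) := by
    linarith [jbracket_le_add_jbracket_sub k l, hF l hl]
  have hinner : ∑ l ∈ F with jbracket l ≤ K, jbracket l ^ α * jbracket (k - l) ^ β
      ≤ 2 ^ (-β) * Cnear * K ^ ((d : ℝ) + α + β) :=
    calc ∑ l ∈ F with jbracket l ≤ K, jbracket l ^ α * jbracket (k - l) ^ β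
        ≤ ∑ l ∈ F with jbracket l ≤ K, jbracket l ^ α * (K / 2) ^ β :=
          sum_le_sum fun l hl => mul_le_mul_of_nonneg_left
            (Real.rpow_le_rpow_of_nonpos (by positivity) (hhalf l (mem_filter.1 hl).1) hβ0)
            (Real.rpow_nonneg (jbracket_pos l).le α)
      _ = (K / 2) ^ β * ∑ l ∈ F with jbracket l ≤ K, jbracket l ^ α := by
          rw [mul_sum]; simp_rw [mul_comm]
      _ ≤ (K / 2) ^ β * (Cnear * K ^ ((d : ℝ) + α)) := by
          gcongr
          exact hnear K hK _ fun l hl => (mem_filter.1 hl).2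
      _ = 2 ^ (-β) * Cnear * K ^ ((d : ℝ) + α + β) := by
          rw [Real.div_rpow (by positivity) zero_le_two, Real.rpow_neg zero_le_two,
            Real.rpow_add (by positivity) ((d : ℝ) + α) β]
          ring
  have houter : ∑ l ∈ F with ¬jbracket l ≤ K, jbracket l ^ α * jbracket (k - l) ^ β
      ≤ Cfar * K ^ ((d : ℝ) + α + β) :=
    calc ∑ l ∈ F with ¬jbracket l ≤ K, jbracket l ^ α * jbracket (k - l) ^ β
        ≤ ∑ l ∈ F with ¬jbracket l ≤ K, jbracket l ^ (α + β) := by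
          refine sum_le_sum fun l hl => ?_
          rw [Real.rpow_add (jbracket_pos l)]
          exact mul_le_mul_of_nonneg_left (Real.rpow_le_rpow_of_nonpos (jbracket_pos l)
            (hF l (mem_filter.1 hl).1) hβ0) (Real.rpow_nonneg (jbracket_pos l).le α)
      _ ≤ Cfar * K ^ ((d : ℝ) + (α + β)) :=
          hfar K hK _ fun l hl => (not_le.1 (mem_filter.1 hl).2).le
      _ = Cfar * K ^ ((d : ℝ) + α + β) := by rw [add_assoc]
  rw [← sum_filter_add_sum_filter_not F (fun l => jbracket l ≤ K)]
  linarith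

lemma exists_sum_mul_le {α β : ℝ} (hα0 : α ≤ 0) (hβ0 : β ≤ 0) (hα : -(d : ℝ) < α)
    (hβ : -(d : ℝ) < β) (hαβ : α + β < -(d : ℝ)) :
    ∃ C, ∀ (k : Fin d → ℤ) (F : Finset (Fin d → ℤ)),
      ∑ l ∈ F, jbracket l ^ α * jbracket (k - l) ^ β ≤ C * jbracket k ^ ((d : ℝ) + α + β) := by
  obtain ⟨Cα, hCα⟩ := exists_sum_mul_le_of_forall_jbracket_le_jbracket_sub hα0 hβ0 hα hαβ
  obtain ⟨Cβ, hCβ⟩ :=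
    exists_sum_mul_le_of_forall_jbracket_le_jbracket_sub hβ0 hα0 hβ (by linarith)
  refine ⟨Cα + Cβ, fun k F => ?_⟩
  rw [← sum_filter_add_sum_filter_not F (fun l => jbracket l ≤ jbracket (k - l)), add_mul]
  refine add_le_add (hCα k _ fun l hl => (mem_filter.1 hl).2) ?_
  set G := {l ∈ F | ¬jbracket l ≤ jbracket (k - l)}
  have hswap : ∑ l ∈ G, jbracket l ^ α * jbracket (k - l) ^ β
      = ∑ m ∈ G.image (k - ·), jbracket m ^ β * jbracket (k - m) ^ α := by
    rw [sum_image fun _ _ _ _ h => sub_right_injective h]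
    simp_rw [sub_sub_cancel, mul_comm]
  rw [hswap, add_right_comm]
  refine hCβ k _ fun m hm => ?_
  obtain ⟨l, hl, rfl⟩ := mem_image.1 hm
  rw [sub_sub_cancel]
  exact (not_le.1 (mem_filter.1 hl).2).le

end

theorem discrete_convolution_estimate_general (d : ℕ) (α β : ℝ)
    (hα0 : α ≤ 0) (hβ0 : β ≤ 0) (hα : -(d : ℝ) < α) (hβ : -(d : ℝ) < β)
    (hαβ : α + β < -(d : ℝ)) :
    ∃ C : ℝ, ∀ k : Fin d → ℤ,
      (∑' l : Fin d → ℤ, jbracket l ^ α * jbracket (k - l) ^ β)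
        ≤ C * jbracket k ^ ((d : ℝ) + α + β) := by
  obtain ⟨C, hC⟩ := exists_sum_mul_le hα0 hβ0 hα hβ hαβ
  refine ⟨C, fun k => ?_⟩
  have hnonneg : 0 ≤ fun l => jbracket l ^ α * jbracket (k - l) ^ β := fun l =>
    mul_nonneg (Real.rpow_nonneg (jbracket_pos l).le α) (Real.rpow_nonneg (jbracket_pos _).le β)
  exact (summable_of_sum_le hnonneg (hC k)).tsum_le_of_sum_le (hC k)

/-- Discrete convolution estimate: for nonpositive `α, β` with `α, β > -d` and `α + β < -d`,
`∑_{ℓ ∈ ℤ^d} ⟨ℓ⟩^α ⟨k-ℓ⟩^β ≲ ⟨k⟩^{d+α+β}` uniformly in `k`. -/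
theorem discrete_convolution_estimate (d : ℕ) (hd : 1 ≤ d) (α β : ℝ)
    (hα0 : α ≤ 0) (hβ0 : β ≤ 0) (hα : -(d : ℝ) < α) (hβ : -(d : ℝ) < β)
    (hαβ : α + β < -(d : ℝ)) :
    ∃ C : ℝ, ∀ k : Fin d → ℤ,
      (∑' l : Fin d → ℤ, jbracket l ^ α * jbracket (k - l) ^ β)
        ≤ C * jbracket k ^ ((d : ℝ) + α + β) :=
  discrete_convolution_estimate_general d α β hα0 hβ0 hα hβ hαβ
end

section
/- Let a, b, c > 0 and γ ∈ [0,1]. Then there is a universal constant C (independent of a, b, c, γ, t) such that ∫_{-∞}^t ∫_{-∞}^t e^{-a(t-s) - b|u-s| - c(t-u)} ds du ≤ C · a^{-(2-γ)/2} · c^{-(2-γ)/2} · b^{-γ}. -/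
/-!
Dropping one of the three terms of the exponent gives three elementary bounds for the integral
`I`: `I ≤ 1 / (a c)` (drop `b |u - s|`), `I ≤ 2 / (b c)` (drop `a (t - s)` and integrate the
Laplace kernel `exp (-b |u - s|)` over the whole line), and `I ≤ 2 / (a b)`, which is the previous
bound after the symmetry `u ↔ s`, `a ↔ c`. Their weighted geometric mean with weights
`1 - γ, γ / 2, γ / 2` is exactly `2 a^{-(2-γ)/2} c^{-(2-γ)/2} b^{-γ}`, so `C = 2` works.
-/

open MeasureTheory Set Real

lemma exp_neg_mul_sub_eq (k t s : ℝ) : exp (-(k * (t - s))) = exp (k * s) / exp (k * t) := by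
  rw [← exp_sub]; ring_nf

lemma integrableOn_exp_neg_mul_sub_Iic {k : ℝ} (hk : 0 < k) (t : ℝ) :
    IntegrableOn (fun s => exp (-(k * (t - s)))) (Iic t) := by
  simp_rw [exp_neg_mul_sub_eq]
  exact (integrableOn_exp_mul_Iic hk t).div_const _

lemma integral_exp_neg_mul_sub_Iic {k : ℝ} (hk : 0 < k) (t : ℝ) :
    ∫ s in Iic t, exp (-(k * (t - s))) = k⁻¹ := by
  simp_rw [exp_neg_mul_sub_eq]
  rw [integral_div, integral_exp_mul_Iic hk]
  field_simp

lemma integral_exp_neg_mul_abs {b : ℝ} (hb : 0 < b) : ∫ x, exp (-(b * |x|)) = 2 * b⁻¹ := by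
  rw [integral_comp_abs (f := fun x => exp (-(b * x)))]
  simp_rw [← neg_mul]
  rw [integral_exp_mul_Ioi (neg_lt_zero.2 hb)]
  simp [div_eq_mul_inv]

lemma integrable_exp_neg_mul_abs {b : ℝ} (hb : 0 < b) : Integrable fun x => exp (-(b * |x|)) :=
  .of_integral_ne_zero (by rw [integral_exp_neg_mul_abs hb]; positivity)

lemma setIntegral_exp_neg_mul_abs_sub_le {b : ℝ} (hb : 0 < b) (v : ℝ) (S : Set ℝ) :
    ∫ x in S, exp (-(b * |x - v|)) ≤ 2 * b⁻¹ :=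
  calc ∫ x in S, exp (-(b * |x - v|)) ≤ ∫ x, exp (-(b * |x - v|)) :=
        setIntegral_le_integral ((integrable_exp_neg_mul_abs hb).comp_sub_right v)
          (.of_forall fun _ => (exp_pos _).le)
    _ = 2 * b⁻¹ := by
        rw [integral_sub_right_eq_self (fun x => exp (-(b * |x|))), integral_exp_neg_mul_abs hb]

lemma le_rpow_mul_rpow_mul_rpow {I x y z p q r : ℝ} (hI : 0 ≤ I) (hx : I ≤ x) (hy : I ≤ y)
    (hz : I ≤ z) (hp : 0 ≤ p) (hq : 0 ≤ q) (hr : 0 ≤ r) (hpqr : p + q + r = 1) :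
    I ≤ x ^ p * y ^ q * z ^ r :=
  calc I = I ^ p * I ^ q * I ^ r := by
        rw [← rpow_add_of_nonneg hI hp hq, ← rpow_add_of_nonneg hI (add_nonneg hp hq) hr, hpqr,
          rpow_one]
    _ ≤ x ^ p * y ^ q * z ^ r := by
        have := hI.trans hx; have := hI.trans hy; gcongr

lemma le_two_mul_rpow_of_pairwise_bounds {I a b c γ : ℝ} (ha : 0 < a) (hb : 0 < b) (hc : 0 < c)
    (hγ0 : 0 ≤ γ) (hγ1 : γ ≤ 1) (hI : 0 ≤ I) (hac : I ≤ c⁻¹ * a⁻¹)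
    (hbc : I ≤ c⁻¹ * (2 * b⁻¹)) (hab : I ≤ a⁻¹ * (2 * b⁻¹)) :
    I ≤ 2 * a ^ (-(2 - γ) / 2) * c ^ (-(2 - γ) / 2) * b ^ (-γ) := by
  have hac' : I ≤ c⁻¹ * (2 * a⁻¹) := hac.trans (by gcongr; linarith [inv_pos.2 ha])
  refine (le_rpow_mul_rpow_mul_rpow (p := 1 - γ) (q := γ / 2) (r := γ / 2) hI hac' hbc hab
    (by linarith) (by linarith) (by linarith) (by ring)).trans_eq ?_
  exact log_injOn_pos (mem_Ioi.2 (by positivity)) (mem_Ioi.2 (by positivity)) (by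
    simp (disch := positivity) only [log_mul, log_rpow, log_inv]
    ring)

theorem integral_integral_le_of_le_mul {α β : Type*} [MeasurableSpace α] [MeasurableSpace β]
    {μ : Measure α} {ν : Measure β} {F k : α → β → ℝ} {w : α → ℝ} {M : ℝ}
    (hF : ∀ u s, 0 ≤ F u s) (hw : Integrable w μ) (hw0 : ∀ u, 0 ≤ w u)
    (hk : ∀ u, Integrable (k u) ν) (hkM : ∀ u, ∫ s, k u s ∂ν ≤ M)
    (hFk : ∀ u, ∀ᵐ s ∂ν, F u s ≤ w u * k u s) :
    ∫ u, ∫ s, F u s ∂ν ∂μ ≤ (∫ u, w u ∂μ) * M := by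
  rw [← integral_mul_const]
  refine integral_mono_of_nonneg (.of_forall fun u => integral_nonneg (hF u)) (hw.mul_const M)
    (.of_forall fun u => ?_)
  calc ∫ s, F u s ∂ν ≤ ∫ s, w u * k u s ∂ν :=
        integral_mono_of_nonneg (.of_forall (hF u)) ((hk u).const_mul _) (hFk u)
    _ = w u * ∫ s, k u s ∂ν := integral_const_mul _ _
    _ ≤ w u * M := mul_le_mul_of_nonneg_left (hkM u) (hw0 u)

noncomputable def doubleExpIntegral (a b c t : ℝ) : ℝ :=
  ∫ u in Iic t, ∫ s in Iic t, exp (-(a * (t - s)) - b * |u - s| - c * (t - u))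

section

variable {a b c : ℝ}

lemma doubleExpIntegral_nonneg (a b c t : ℝ) : 0 ≤ doubleExpIntegral a b c t :=
  integral_nonneg fun _ => integral_nonneg fun _ => (exp_pos _).le

lemma doubleExpIntegral_le_inv_mul_inv (ha : 0 < a) (hb : 0 ≤ b) (hc : 0 < c) (t : ℝ) :
    doubleExpIntegral a b c t ≤ c⁻¹ * a⁻¹ := by
  rw [← integral_exp_neg_mul_sub_Iic hc t, ← integral_exp_neg_mul_sub_Iic ha t]
  refine integral_integral_le_of_le_mul (fun _ _ => (exp_pos _).le)
    (integrableOn_exp_neg_mul_sub_Iic hc t) (fun _ => (exp_pos _).le)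
    (fun _ => integrableOn_exp_neg_mul_sub_Iic ha t) (fun _ => le_rfl)
    (fun u => .of_forall fun s => ?_)
  rw [← exp_add]
  exact exp_le_exp.2 (by nlinarith [abs_nonneg (u - s)])

lemma doubleExpIntegral_le_inv_mul_two_inv (ha : 0 ≤ a) (hb : 0 < b) (hc : 0 < c) (t : ℝ) :
    doubleExpIntegral a b c t ≤ c⁻¹ * (2 * b⁻¹) := by
  rw [← integral_exp_neg_mul_sub_Iic hc t]
  refine integral_integral_le_of_le_mul (k := fun u s => exp (-(b * |s - u|)))
    (fun _ _ => (exp_pos _).le) (integrableOn_exp_neg_mul_sub_Iic hc t) (fun _ => (exp_pos _).le)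
    (fun u => ((integrable_exp_neg_mul_abs hb).comp_sub_right u).integrableOn)
    (fun u => setIntegral_exp_neg_mul_abs_sub_le hb u _)
    (fun u => (ae_restrict_mem measurableSet_Iic).mono fun s (hs : s ≤ t) => ?_)
  rw [← exp_add, abs_sub_comm]
  exact exp_le_exp.2 (by nlinarith)

lemma doubleExpIntegral_comm (ha : 0 < a) (hb : 0 ≤ b) (hc : 0 < c) (t : ℝ) :
    doubleExpIntegral a b c t = doubleExpIntegral c b a t := by
  have hprod := (integrableOn_exp_neg_mul_sub_Iic hc t).mul_prod
    (integrableOn_exp_neg_mul_sub_Iic ha t)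
  have hint : Integrable (fun z : ℝ × ℝ =>
      exp (-(a * (t - z.2)) - b * |z.1 - z.2| - c * (t - z.1)))
      ((volume.restrict (Iic t)).prod (volume.restrict (Iic t))) := by
    refine hprod.mono' (by fun_prop) (.of_forall fun z => ?_)
    rw [norm_of_nonneg (exp_pos _).le, ← exp_add]
    exact exp_le_exp.2 (by nlinarith [abs_nonneg (z.1 - z.2)])
  rw [doubleExpIntegral, integral_integral_swap hint, doubleExpIntegral]
  congr! 4 with s u
  rw [abs_sub_comm]
  ring_nf

end

/-- There is a universal constant `C` such that for all `a, b, c > 0`, `γ ∈ [0,1]` and `t ∈ ℝ`,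
`∫_{-∞}^t ∫_{-∞}^t e^{-a(t-s) - b|u-s| - c(t-u)} ds du ≤ C a^{-(2-γ)/2} c^{-(2-γ)/2} b^{-γ}`. -/
theorem double_exponential_integral_bound :
    ∃ C : ℝ, 0 < C ∧ ∀ (a b c γ t : ℝ), 0 < a → 0 < b → 0 < c → γ ∈ Set.Icc (0 : ℝ) 1 →
      (∫ u in Set.Iic t, ∫ s in Set.Iic t,
          Real.exp (-(a * (t - s)) - b * |u - s| - c * (t - u)))
        ≤ C * a ^ (-(2 - γ) / 2) * c ^ (-(2 - γ) / 2) * b ^ (-γ) := by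
  refine ⟨2, two_pos, fun a b c γ t ha hb hc hγ => ?_⟩
  have hab := doubleExpIntegral_le_inv_mul_two_inv hc.le hb ha t
  rw [← doubleExpIntegral_comm ha hb.le hc] at hab
  exact le_two_mul_rpow_of_pairwise_bounds ha hb hc hγ.1 hγ.2 (doubleExpIntegral_nonneg a b c t)
    (doubleExpIntegral_le_inv_mul_inv ha hb.le hc t)
    (doubleExpIntegral_le_inv_mul_two_inv ha.le hb hc t) hab
end
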